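/- Let P, Q be probability measures on ℝ^d with disjoint supports, and M̃ = αP∗N(0,σ²I) + (1−α)Q∗N(0,σ²I) with 0<α<1. Then for f(t)=t log t, B_f(P,Q|M̃) = D_KL(P‖Q) is infinite, yet each individual term ∫ f(p/m̃) dM̃ = D_KL-type integral of p against m̃ is finite whenever P has finite differential entropy and finite second moment. -/

import Mathlib

open MeasureTheory ENNReal Classical

/-- The Kullback–Leibler divergence `D_KL(P‖Q) ∈ [0,∞]`, with the convention that it is `⊤`
unless `P ≪ Q` and the log-likelihood ratio is integrable. -/
noncomputable def klDiv' {α : Type*} [MeasurableSpace α] (P Q : Measure α) : ℝ≥0∞ :=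
  if P ≪ Q ∧ Integrable (fun x => Real.log (P.rnDeriv Q x).toReal) P then
    ENNReal.ofReal (∫ x, Real.log (P.rnDeriv Q x).toReal ∂P)
  else ⊤

/-- The isotropic Gaussian density of `N(0, σ²I)` on `ℝ^d`. -/
noncomputable def gaussPdf (d : ℕ) (σ : ℝ) (x : EuclideanSpace ℝ (Fin d)) : ℝ :=
  (2 * Real.pi * σ ^ 2) ^ (-(d : ℝ) / 2) * Real.exp (-‖x‖ ^ 2 / (2 * σ ^ 2))

/-!
The measures `P` and `Q` live on disjoint sets, so `P` has mass where `Q` has none and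
`P ≪ Q` fails, which makes `D_KL(P‖Q)` infinite. On the other hand, Gaussian smoothing makes
the mixture density `m̃` bounded above by the Gaussian normalising constant and below by a
multiple of `exp (-‖x‖² / σ²)` (from `‖x - y‖² ≤ 2‖x‖² + 2‖y‖²`). Hence `|log m̃ x|` grows at
most like `‖x‖²`, and `p log (p / m̃) = p log p - p log m̃` is integrable as soon as `p` has
finite entropy and finite second moment.
-/

section Singular

variable {α : Type*} [MeasurableSpace α] {μ : Measure α}

theorem not_absolutelyContinuous_withDensity_of_disjoint_support {f g : α → ℝ≥0∞}
    (hfg : Disjoint (Function.support f) (Function.support g)) (hf : μ.withDensity f ≠ 0) :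
    ¬ μ.withDensity f ≪ μ.withDensity g := by
  intro hac
  -- `f` need not be measurable, so we pass to a measurable minorant with the same integral.
  obtain ⟨h, hh_meas, hhf, hh_int⟩ := exists_measurable_le_lintegral_eq μ f
  set A := Function.support h
  have hA : MeasurableSet A := hh_meas (measurableSet_singleton 0).compl
  have hAf : A ⊆ Function.support f := fun x hx => (pos_iff_ne_zero.2 hx |>.trans_le (hhf x)).ne'
  have hgA : μ.withDensity g A = 0 := by
    rw [withDensity_apply _ hA, setLIntegral_congr_fun hA fun x hx =>
      Function.notMem_support.mp (hfg.notMem_of_mem_left (hAf hx)), lintegral_zero]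
  have hf_int : ∫⁻ x, f x ∂μ ≠ 0 := by
    rwa [Ne, ← setLIntegral_univ, ← withDensity_apply _ MeasurableSet.univ,
      Measure.measure_univ_eq_zero]
  have hfA : ∫⁻ x, f x ∂μ ≤ μ.withDensity f A := by
    rw [hh_int, withDensity_apply _ hA, ← setLIntegral_eq_of_support_subset subset_rfl]
    exact lintegral_mono hhf
  exact hf_int (le_antisymm (hfA.trans (hac hgA).le) zero_le)

theorem klDiv'_eq_top_of_not_absolutelyContinuous {P Q : Measure α} (h : ¬ P ≪ Q) :
    klDiv' P Q = ⊤ :=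
  if_neg fun hPQ => h hPQ.1

end Singular

theorem aemeasurable_of_aemeasurable_norm_pow_mul {E : Type*} [NormedAddCommGroup E]
    [MeasurableSpace E] [OpensMeasurableSpace E] [MeasurableSingletonClass E] {μ : Measure E}
    {f : E → ℝ} {n : ℕ}
    (h : AEMeasurable (fun x => ‖x‖ ^ n * f x) μ) : AEMeasurable f μ := by
  refine ⟨fun x => if x = 0 then f 0 else (‖x‖ ^ n)⁻¹ * h.mk _ x,
    Measurable.ite (measurableSet_singleton 0) measurable_const
      ((measurable_norm.pow_const n).inv.mul h.measurable_mk), ?_⟩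
  filter_upwards [h.ae_eq_mk] with x hx
  split_ifs with h0
  · rw [h0]
  · rw [← hx, inv_mul_cancel_left₀ (pow_ne_zero _ (norm_ne_zero_iff.mpr h0))]

section Integrability

variable {α : Type*} [MeasurableSpace α] {μ : Measure α}

theorem integrable_of_isFiniteMeasure_withDensity_ofReal {p : α → ℝ} (hp0 : 0 ≤ᵐ[μ] p)
    (hp : AEMeasurable p μ) [IsFiniteMeasure (μ.withDensity fun x => ENNReal.ofReal (p x))] :
    Integrable p μ := by
  refine ⟨hp.aestronglyMeasurable, (hasFiniteIntegral_iff_ofReal hp0).2 ?_⟩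
  rw [← setLIntegral_univ, ← withDensity_apply _ MeasurableSet.univ]
  exact measure_lt_top _ _

theorem Real.abs_log_le_of_mul_exp_neg_le_of_le {a m C w : ℝ} (ha : 0 < a) (hw : 0 ≤ w)
    (hlow : a * Real.exp (-w) ≤ m) (hup : m ≤ C) :
    |Real.log m| ≤ |Real.log a| + |Real.log C| + w := by
  have hm : 0 < m := (by positivity : 0 < a * Real.exp (-w)).trans_le hlow
  have hlog_low : Real.log a - w ≤ Real.log m := by
    simpa [Real.log_mul ha.ne' (Real.exp_pos _).ne', sub_eq_add_neg] using
      Real.log_le_log (by positivity) hlow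
  have hlog_up : Real.log m ≤ Real.log C := Real.log_le_log hm hup
  rw [abs_le]
  constructor <;> linarith [neg_abs_le (Real.log a), le_abs_self (Real.log C),
    abs_nonneg (Real.log a), abs_nonneg (Real.log C)]

theorem integrable_mul_log_of_mul_exp_neg_le_of_le {p m w : α → ℝ} {a C : ℝ}
    (hp : Integrable p μ) (hpw : Integrable (fun x => w x * p x) μ) (hm : AEMeasurable m μ)
    (hw : ∀ x, 0 ≤ w x) (ha : 0 < a) (hlow : ∀ x, a * Real.exp (-w x) ≤ m x)
    (hup : ∀ x, m x ≤ C) : Integrable (fun x => p x * Real.log (m x)) μ := by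
  set K := |Real.log a| + |Real.log C|
  refine ((hp.norm.const_mul K).add hpw.norm).mono'
    (hp.aestronglyMeasurable.mul (Real.measurable_log.comp_aemeasurable hm).aestronglyMeasurable)
    (ae_of_all _ fun x => ?_)
  have hlog := Real.abs_log_le_of_mul_exp_neg_le_of_le ha (hw x) (hlow x) (hup x)
  calc ‖p x * Real.log (m x)‖
      = ‖p x‖ * |Real.log (m x)| := by rw [norm_mul, Real.norm_eq_abs (Real.log (m x))]
    _ ≤ ‖p x‖ * (K + w x) := by gcongr
    _ = K * ‖p x‖ + ‖w x * p x‖ := by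
      rw [norm_mul, Real.norm_of_nonneg (hw x)]
      ring

theorem MeasureTheory.Integrable.mul_log_div {p m : α → ℝ}
    (hp : Integrable (fun x => p x * Real.log (p x)) μ)
    (hpm : Integrable (fun x => p x * Real.log (m x)) μ) (hm : ∀ x, m x ≠ 0) :
    Integrable (fun x => p x * Real.log (p x / m x)) μ := by
  refine (hp.sub hpm).congr (ae_of_all _ fun x => ?_)
  by_cases hx : p x = 0
  · simp [hx]
  · simp only [Pi.sub_apply, Real.log_div hx (hm x), mul_sub]

end Integrability

section Gaussian

variable {d : ℕ} {σ : ℝ}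

theorem continuous_gaussPdf : Continuous (gaussPdf d σ) := by
  unfold gaussPdf
  fun_prop

theorem gaussPdf_nonneg (x : EuclideanSpace ℝ (Fin d)) : 0 ≤ gaussPdf d σ x := by
  unfold gaussPdf
  positivity

theorem gaussPdf_pos (hσ : σ ≠ 0) (x : EuclideanSpace ℝ (Fin d)) : 0 < gaussPdf d σ x := by
  unfold gaussPdf
  have : 0 < 2 * Real.pi * σ ^ 2 := by positivity
  exact mul_pos (Real.rpow_pos_of_pos this _) (Real.exp_pos _)

theorem gaussPdf_le_gaussPdf_zero (x : EuclideanSpace ℝ (Fin d)) :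
    gaussPdf d σ x ≤ gaussPdf d σ 0 := by
  unfold gaussPdf
  gcongr
  simp

theorem gaussPdf_zero_mul_exp_mul_exp_le_gaussPdf_sub (x y : EuclideanSpace ℝ (Fin d)) :
    gaussPdf d σ 0 * Real.exp (-(‖x‖ ^ 2 / σ ^ 2)) * Real.exp (-(‖y‖ ^ 2 / σ ^ 2))
      ≤ gaussPdf d σ (x - y) := by
  have hxy : ‖x - y‖ ^ 2 ≤ 2 * ‖x‖ ^ 2 + 2 * ‖y‖ ^ 2 := by
    nlinarith [norm_sub_le x y, norm_nonneg (x - y), sq_nonneg (‖x‖ - ‖y‖)]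
  have hexp : -(‖x‖ ^ 2 / σ ^ 2) + -(‖y‖ ^ 2 / σ ^ 2)
      = -(2 * ‖x‖ ^ 2 + 2 * ‖y‖ ^ 2) / (2 * σ ^ 2) := by
    ring
  unfold gaussPdf
  rw [mul_assoc, ← Real.exp_add, hexp, norm_zero, zero_pow two_ne_zero, neg_zero, zero_div,
    Real.exp_zero, mul_one]
  gcongr

end Gaussian

section GaussConv

variable {d : ℕ} {σ : ℝ} {μ : Measure (EuclideanSpace ℝ (Fin d))}

/-- The density of `μ ∗ N(0, σ²I)`. -/
noncomputable def gaussConv (d : ℕ) (σ : ℝ) (μ : Measure (EuclideanSpace ℝ (Fin d)))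
    (x : EuclideanSpace ℝ (Fin d)) : ℝ :=
  ∫ y, gaussPdf d σ (x - y) ∂μ

theorem measurable_gaussConv [SFinite μ] : Measurable (gaussConv d σ μ) :=
  (continuous_gaussPdf.comp (continuous_fst.sub continuous_snd)).stronglyMeasurable
    |>.integral_prod_right' |>.measurable

theorem integrable_gaussPdf_sub [IsFiniteMeasure μ] (x : EuclideanSpace ℝ (Fin d)) :
    Integrable (fun y => gaussPdf d σ (x - y)) μ := by
  refine (integrable_const (gaussPdf d σ 0)).mono'
    (continuous_gaussPdf.comp (continuous_const.sub continuous_id)).aestronglyMeasurable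
    (ae_of_all _ fun y => ?_)
  rw [Real.norm_of_nonneg (gaussPdf_nonneg _)]
  exact gaussPdf_le_gaussPdf_zero _

theorem gaussConv_nonneg (x : EuclideanSpace ℝ (Fin d)) : 0 ≤ gaussConv d σ μ x :=
  integral_nonneg fun _ => gaussPdf_nonneg _

theorem gaussConv_le [IsProbabilityMeasure μ] (x : EuclideanSpace ℝ (Fin d)) :
    gaussConv d σ μ x ≤ gaussPdf d σ 0 := by
  calc gaussConv d σ μ x ≤ ∫ _, gaussPdf d σ 0 ∂μ :=
        integral_mono (integrable_gaussPdf_sub x) (integrable_const _)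
          fun _ => gaussPdf_le_gaussPdf_zero _
    _ = gaussPdf d σ 0 := by simp

theorem integrable_exp_neg_norm_sq_div [IsFiniteMeasure μ] :
    Integrable (fun y => Real.exp (-(‖y‖ ^ 2 / σ ^ 2))) μ := by
  refine (integrable_const 1).mono' (by fun_prop) (ae_of_all _ fun y => ?_)
  rw [Real.norm_of_nonneg (Real.exp_pos _).le, Real.exp_le_one_iff, neg_nonpos]
  positivity

theorem mul_exp_le_gaussConv [IsFiniteMeasure μ] (x : EuclideanSpace ℝ (Fin d)) :
    gaussPdf d σ 0 * (∫ y, Real.exp (-(‖y‖ ^ 2 / σ ^ 2)) ∂μ) * Real.exp (-(‖x‖ ^ 2 / σ ^ 2))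
      ≤ gaussConv d σ μ x := by
  calc _ = ∫ y, gaussPdf d σ 0 * Real.exp (-(‖x‖ ^ 2 / σ ^ 2))
          * Real.exp (-(‖y‖ ^ 2 / σ ^ 2)) ∂μ := by
        rw [integral_const_mul]
        ring
    _ ≤ gaussConv d σ μ x :=
        integral_mono (integrable_exp_neg_norm_sq_div.const_mul _) (integrable_gaussPdf_sub x)
          fun y => gaussPdf_zero_mul_exp_mul_exp_le_gaussPdf_sub x y

end GaussConv

theorem disjoint_support_KL_infinite_but_terms_finite_general
    {d : ℕ} (σ : ℝ) (hσ : 0 < σ)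
    (P Q : Measure (EuclideanSpace ℝ (Fin d)))
    [IsProbabilityMeasure P] [IsProbabilityMeasure Q]
    (p q : EuclideanSpace ℝ (Fin d) → ℝ)
    (hp_nonneg : ∀ x, 0 ≤ p x)
    (hp : P = volume.withDensity fun x => ENNReal.ofReal (p x))
    (hq : Q = volume.withDensity fun x => ENNReal.ofReal (q x))
    (hdisj : Disjoint (Function.support p) (Function.support q))
    (hP_nonzero : P ≠ 0)
    (α : ℝ) (hα0 : 0 < α) (hα1 : α < 1)
    (mt : EuclideanSpace ℝ (Fin d) → ℝ)
    (hmt : ∀ x, mt x = α * (∫ y, gaussPdf d σ (x - y) ∂P)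
      + (1 - α) * (∫ y, gaussPdf d σ (x - y) ∂Q))
    (h_entropy : Integrable (fun x => p x * Real.log (p x)))
    (h_moment : Integrable (fun x => ‖x‖ ^ 2 * p x)) :
    klDiv' P Q = ⊤
    ∧ Integrable (fun x => p x * Real.log (p x / mt x)) := by
  have hPQ : ¬ P ≪ Q := by
    rw [hp, hq]
    exact not_absolutelyContinuous_withDensity_of_disjoint_support
      (hdisj.mono (Function.support_comp_subset ENNReal.ofReal_zero p)
        (Function.support_comp_subset ENNReal.ofReal_zero q)) (hp ▸ hP_nonzero)
  refine ⟨klDiv'_eq_top_of_not_absolutelyContinuous hPQ, ?_⟩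
  have hmt_eq : mt = fun x => α * gaussConv d σ P x + (1 - α) * gaussConv d σ Q x :=
    funext hmt
  set c := ∫ y, Real.exp (-(‖y‖ ^ 2 / σ ^ 2)) ∂P
  have ha : 0 < α * gaussPdf d σ 0 * c :=
    mul_pos (mul_pos hα0 (gaussPdf_pos hσ.ne' 0))
      (integral_exp_pos integrable_exp_neg_norm_sq_div)
  have hlow : ∀ x, α * gaussPdf d σ 0 * c * Real.exp (-(‖x‖ ^ 2 / σ ^ 2)) ≤ mt x := by
    intro x
    rw [hmt_eq]
    nlinarith [mul_exp_le_gaussConv (σ := σ) (μ := P) x, gaussConv_nonneg (σ := σ) (μ := Q) x]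
  have hup : ∀ x, mt x ≤ gaussPdf d σ 0 := by
    intro x
    rw [hmt_eq]
    nlinarith [gaussConv_le (σ := σ) (μ := P) x, gaussConv_le (σ := σ) (μ := Q) x]
  have hp_int : Integrable p := by
    have : IsFiniteMeasure (volume.withDensity fun x => ENNReal.ofReal (p x)) :=
      hp ▸ inferInstance
    exact integrable_of_isFiniteMeasure_withDensity_ofReal (ae_of_all _ hp_nonneg)
      (aemeasurable_of_aemeasurable_norm_pow_mul h_moment.aemeasurable)
  have hp_weighted : Integrable (fun x => ‖x‖ ^ 2 / σ ^ 2 * p x) := by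
    simpa only [div_mul_eq_mul_div] using h_moment.div_const (σ ^ 2)
  have hmt_meas : Measurable mt := by
    rw [hmt_eq]
    exact (measurable_gaussConv.const_mul α).add (measurable_gaussConv.const_mul _)
  refine h_entropy.mul_log_div ?_ fun x => ((mul_pos ha (Real.exp_pos _)).trans_le (hlow x)).ne'
  exact integrable_mul_log_of_mul_exp_neg_le_of_le hp_int hp_weighted hmt_meas.aemeasurable
    (fun x => by positivity) ha hlow hup

/-- For `P, Q` with disjoint supports and
`M̃ = αP∗N(0,σ²I) + (1−α)Q∗N(0,σ²I)` (density `m̃`), with `f(t) = t log t` the scaled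
Bregman divergence `B_f(P,Q|M̃) = D_KL(P‖Q)` is infinite; yet the individual term
`∫ f(p/m̃) dM̃ = ∫ p log(p/m̃)` is finite (integrable) whenever `P` has finite differential
entropy and finite second moment. -/
theorem disjoint_support_KL_infinite_but_terms_finite
    {d : ℕ} (σ : ℝ) (hσ : 0 < σ)
    (P Q : Measure (EuclideanSpace ℝ (Fin d)))
    [IsProbabilityMeasure P] [IsProbabilityMeasure Q]
    (p q : EuclideanSpace ℝ (Fin d) → ℝ)
    (hp_nonneg : ∀ x, 0 ≤ p x) (hq_nonneg : ∀ x, 0 ≤ q x)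
    (hp : P = volume.withDensity fun x => ENNReal.ofReal (p x))
    (hq : Q = volume.withDensity fun x => ENNReal.ofReal (q x))
    (hdisj : Disjoint (Function.support p) (Function.support q))
    (hP_nonzero : P ≠ 0)
    (α : ℝ) (hα0 : 0 < α) (hα1 : α < 1)
    (mt : EuclideanSpace ℝ (Fin d) → ℝ)
    (hmt : ∀ x, mt x = α * (∫ y, gaussPdf d σ (x - y) ∂P)
      + (1 - α) * (∫ y, gaussPdf d σ (x - y) ∂Q))
    (h_entropy : Integrable (fun x => p x * Real.log (p x)))
    (h_moment : Integrable (fun x => ‖x‖ ^ 2 * p x)) :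
    klDiv' P Q = ⊤
    ∧ Integrable (fun x => p x * Real.log (p x / mt x)) :=
  disjoint_support_KL_infinite_but_terms_finite_general σ hσ P Q p q hp_nonneg hp hq hdisj
    hP_nonzero α hα0 hα1 mt hmt h_entropy h_moment
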